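/- Let f be a monic real polynomial of degree n ≥ 1 satisfying Assumption 1, with even/odd splitting f = p − q. Let x₀ > 0 be such that p(x₀) > q(x₀) and f has no real root in the interval [x₀, +∞). Then the sequence defined by x_{t+1} = x_t · p(x_t)/q(x_t) is strictly increasing and tends to +∞. -/

import Mathlib

/-!
Reflecting the roots, `(-1)^n f(-X)` is monic with all its complex roots in the closed left
half-plane, so it is a product of real factors `X - r` and `X² - 2 Re z X + |z|²` with
nonnegative coefficients. Hence the coefficients `c_j` of `f` satisfy `(-1)^(n+j) c_j ≥ 0`,
i.e. `q` has nonnegative coefficients; moreover `c_{n-1}` is minus the sum of the roots, which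
has positive real part, so `q > 0` on `(0, ∞)`. As `f = p - q` stays positive on `[x₀, ∞)`, the
update `x ↦ x p(x)/q(x)` strictly exceeds the identity there, and an increasing orbit bounded
above would converge to a fixed point of the update, i.e. to a root of `f` in `[x₀, ∞)`.
-/

open Filter Polynomial Topology

namespace Polynomial

lemma coeff_mul_nonneg {R : Type*} [Semiring R] [PartialOrder R] [IsOrderedRing R]
    {p q : R[X]} (hp : ∀ i, 0 ≤ p.coeff i) (hq : ∀ i, 0 ≤ q.coeff i) (k : ℕ) :
    0 ≤ (p * q).coeff k := by
  rw [coeff_mul]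
  exact Finset.sum_nonneg fun x _ => mul_nonneg (hp x.1) (hq x.2)

lemma exists_monic_dvd_coeff_nonneg_of_aeval_eq_zero {g : ℝ[X]} {z : ℂ} (hz : aeval z g = 0)
    (hre : z.re ≤ 0) :
    ∃ d : ℝ[X], d.Monic ∧ 0 < d.natDegree ∧ (∀ i, 0 ≤ d.coeff i) ∧ d ∣ g := by
  by_cases him : z.im = 0
  · have hz_real : z = algebraMap ℝ ℂ z.re := Complex.ext rfl (by simp [him])
    refine ⟨X - C z.re, monic_X_sub_C _, by simp, fun i => ?_, dvd_iff_isRoot.mpr ?_⟩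
    · rcases i with _ | _ | i <;> simp [coeff_X, coeff_C]
      linarith
    · rw [hz_real, aeval_algebraMap_apply_eq_algebraMap_eval] at hz
      exact (FaithfulSMul.algebraMap_eq_zero_iff ℝ ℂ).mp hz
  · have hd := isMonicOfDegree_sub_add_two (2 * z.re) (‖z‖ ^ 2)
    refine ⟨_, hd.monic, by rw [hd.natDegree_eq]; norm_num, fun i => ?_,
      quadratic_dvd_of_aeval_eq_zero_im_ne_zero g hz him⟩
    rcases i with _ | _ | _ | i <;> simp [coeff_X, coeff_C, coeff_X_pow, -map_pow]
    linarith

theorem coeff_nonneg_of_monic_of_roots_re_nonpos {g : ℝ[X]} (hg : g.Monic)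
    (hroots : ∀ z : ℂ, aeval z g = 0 → z.re ≤ 0) (j : ℕ) : 0 ≤ g.coeff j := by
  induction hN : g.natDegree using Nat.strong_induction_on generalizing g j with
  | _ N ih =>
  rcases Nat.eq_zero_or_pos N with rfl | hpos
  · rw [hg.natDegree_eq_zero.mp hN, coeff_one]
    split_ifs <;> norm_num
  obtain ⟨z, hz⟩ := IsAlgClosed.exists_aeval_eq_zero ℂ g <| by
    rw [degree_eq_natDegree hg.ne_zero, hN]; exact_mod_cast hpos.ne'
  obtain ⟨d, hd, hd_pos, hd_coeff, k, rfl⟩ :=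
    exists_monic_dvd_coeff_nonneg_of_aeval_eq_zero hz (hroots z hz)
  have hk : k.Monic := hd.of_mul_monic_left hg
  have hk_deg : k.natDegree < N := by rw [← hN, hd.natDegree_mul hk]; omega
  have hk_roots : ∀ w : ℂ, aeval w k = 0 → w.re ≤ 0 := fun w hw =>
    hroots w (by rw [map_mul, hw, mul_zero])
  exact coeff_mul_nonneg hd_coeff (fun i => ih _ hk_deg hk hk_roots i rfl) j

theorem neg_one_pow_mul_coeff_nonneg {f : ℝ[X]} (hf : f.Monic)
    (hroots : ∀ z : ℂ, aeval z f = 0 → 0 ≤ z.re) (j : ℕ) :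
    0 ≤ (-1) ^ (f.natDegree + j) * f.coeff j := by
  have hroots' : ∀ z : ℂ, aeval z ((-1) ^ f.natDegree * f.comp (-X)) = 0 → z.re ≤ 0 :=
    fun z hz => by
      have := hroots (-z) (by simpa [aeval_comp] using hz)
      rw [Complex.neg_re] at this
      linarith
  have h := coeff_nonneg_of_monic_of_roots_re_nonpos
    hf.neg_one_pow_natDegree_mul_comp_neg_X hroots' j
  rw [← C_1, ← C_neg, ← C_pow, coeff_C_mul, ← neg_one_mul (X : ℝ[X]), ← C_1, ← C_neg,
    comp_C_mul_X_coeff] at h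
  rwa [pow_add, mul_assoc, mul_comm ((-1 : ℝ) ^ j)]

theorem nextCoeff_neg_of_roots_re_nonneg {f : ℝ[X]} (hf : f.Monic)
    (hroots : ∀ z : ℂ, aeval z f = 0 → 0 ≤ z.re)
    (hpos : ∃ z : ℂ, aeval z f = 0 ∧ 0 < z.re) : f.nextCoeff < 0 := by
  obtain ⟨z, hz, hz_re⟩ := hpos
  set F := f.map (algebraMap ℝ ℂ)
  have hmem : ∀ w, w ∈ F.roots ↔ aeval w f = 0 := fun w => by
    simp [F, mem_roots (hf.map _).ne_zero, aeval_def, eval_map]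
  have hsum : 0 < (F.roots.map Complex.re).sum := by
    refine hz_re.trans_le <| Multiset.single_le_sum (fun a ha => ?_) _
      (Multiset.mem_map_of_mem _ ((hmem z).2 hz))
    obtain ⟨w, hw, rfl⟩ := Multiset.mem_map.mp ha
    exact hroots w ((hmem w).1 hw)
  have hnext : (f.nextCoeff : ℂ) = -F.roots.sum := by
    rw [← (IsAlgClosed.splits F).nextCoeff_eq_neg_sum_roots_of_monic (hf.map _),
      nextCoeff_map (algebraMap ℝ ℂ).injective]
    rfl
  have hre : f.nextCoeff = -(F.roots.map Complex.re).sum := by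
    rw [← Complex.ofReal_re f.nextCoeff, hnext, Complex.neg_re]
    exact congrArg Neg.neg (map_multiset_sum Complex.reAddGroupHom F.roots)
  linarith

end Polynomial

/-- The polynomials `p` and `q` of the splitting `f = p - q`, parities being counted from `n`. -/
def evenSplit (f : ℝ[X]) (n : ℕ) (x : ℝ) : ℝ :=
  ∑ j ∈ Finset.range (n + 1), if (n + j) % 2 = 0 then f.coeff j * x ^ j else 0

def oddSplit (f : ℝ[X]) (n : ℕ) (x : ℝ) : ℝ :=
  ∑ j ∈ Finset.range (n + 1), if (n + j) % 2 = 1 then -(f.coeff j) * x ^ j else 0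

section Split

variable (f : ℝ[X]) (n : ℕ)

lemma eval_eq_evenSplit_sub_oddSplit (hdeg : f.natDegree = n) (y : ℝ) :
    f.eval y = evenSplit f n y - oddSplit f n y := by
  rw [evenSplit, oddSplit, ← Finset.sum_sub_distrib, eval_eq_sum_range, hdeg]
  refine Finset.sum_congr rfl fun j _ => ?_
  split_ifs <;> first | omega | ring

lemma continuous_evenSplit : Continuous (evenSplit f n) :=
  continuous_finsetSum _ fun _ _ =>
    continuous_if_const _ (fun _ => by fun_prop) fun _ => continuous_const

lemma continuous_oddSplit : Continuous (oddSplit f n) :=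
  continuous_finsetSum _ fun _ _ =>
    continuous_if_const _ (fun _ => by fun_prop) fun _ => continuous_const

lemma oddSplit_pos (hn : 1 ≤ n) (hsign : ∀ j, 0 ≤ (-1) ^ (n + j) * f.coeff j)
    (hnext : f.coeff (n - 1) < 0) {y : ℝ} (hy : 0 < y) : 0 < oddSplit f n y := by
  refine Finset.sum_pos' (fun j _ => ?_) ⟨n - 1, Finset.mem_range.mpr (by omega), ?_⟩
  · split_ifs with hodd
    · have := hsign j
      rw [(Nat.odd_iff.mpr hodd).neg_one_pow] at this
      exact mul_nonneg (by linarith) (pow_nonneg hy.le j)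
    · exact le_rfl
  · rw [if_pos (by omega)]
    exact mul_pos (neg_pos.mpr hnext) (pow_pos hy _)

end Split

theorem pos_of_continuousOn_Ici {g : ℝ → ℝ} {a : ℝ} (hg : ContinuousOn g (Set.Ici a))
    (ha : 0 < g a) (hne : ∀ y, a ≤ y → g y ≠ 0) {y : ℝ} (hy : a ≤ y) : 0 < g y := by
  by_contra! hneg
  obtain ⟨c, hc, hc0⟩ := intermediate_value_Icc' hy (hg.mono Set.Icc_subset_Ici_self)
    ⟨hneg, ha.le⟩
  exact hne c hc.1 hc0

theorem strictMono_tendsto_atTop_of_lt_map {T : ℝ → ℝ} {a : ℝ}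
    (hT : ∀ y, a ≤ y → ContinuousAt T y) (hlt : ∀ y, a ≤ y → y < T y) {x : ℕ → ℝ}
    (h0 : a ≤ x 0) (hrec : ∀ t, x (t + 1) = T (x t)) :
    StrictMono x ∧ Tendsto x atTop atTop := by
  have hge : ∀ t, a ≤ x t := fun t => by
    induction t with
    | zero => exact h0
    | succ t ih => exact ih.trans ((hrec t).symm ▸ (hlt _ ih).le)
  have hmono : StrictMono x :=
    strictMono_nat_of_lt_succ fun t => (hrec t).symm ▸ hlt _ (hge t)
  refine ⟨hmono, ?_⟩
  rcases tendsto_atTop_of_monotone hmono.monotone with h | ⟨l, hl⟩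
  · exact h
  have hal : a ≤ l := ge_of_tendsto' hl hge
  have hT_lim : Tendsto (fun t => T (x t)) atTop (𝓝 (T l)) := (hT l hal).tendsto.comp hl
  have hshift : Tendsto (fun t => T (x t)) atTop (𝓝 l) := by
    simpa only [Function.comp_def, hrec] using hl.comp (tendsto_add_atTop_nat 1)
  exact absurd (tendsto_nhds_unique hshift hT_lim) (hlt l hal).ne

/-- Let `f` be a monic real polynomial of degree `n ≥ 1` satisfying
Assumption 1, with even/odd splitting `f = p - q`. Let `x₀ > 0` with `p x₀ > q x₀` and
such that `f` has no real root in `[x₀, +∞)`. Then the sequence defined by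
`x (t+1) = x t * p (x t) / q (x t)` is strictly increasing and tends to `+∞`. -/
theorem stmt10 (f : Polynomial ℝ) (n : ℕ) (hn : 1 ≤ n)
    (hmonic : f.Monic) (hdeg : f.natDegree = n)
    (has1 : ∀ z : ℂ, (Polynomial.aeval z) f = 0 → 0 ≤ z.re)
    (has2 : ∃ z : ℂ, (Polynomial.aeval z) f = 0 ∧ 0 < z.re)
    (p q : ℝ → ℝ)
    (hp : ∀ x : ℝ, p x =
      ∑ j ∈ Finset.range (n + 1), if (n + j) % 2 = 0 then f.coeff j * x ^ j else 0)
    (hq : ∀ x : ℝ, q x =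
      ∑ j ∈ Finset.range (n + 1), if (n + j) % 2 = 1 then -(f.coeff j) * x ^ j else 0)
    (x₀ : ℝ) (hx₀ : 0 < x₀) (hpq : q x₀ < p x₀)
    (hnoroot : ∀ t : ℝ, x₀ ≤ t → ¬ f.IsRoot t)
    (x : ℕ → ℝ) (hx0 : x 0 = x₀)
    (hxrec : ∀ t : ℕ, x (t + 1) = x t * p (x t) / q (x t)) :
    StrictMono x ∧ Tendsto x atTop atTop := by
  obtain rfl : p = evenSplit f n := funext hp
  obtain rfl : q = oddSplit f n := funext hq
  have hsign : ∀ j, 0 ≤ (-1) ^ (n + j) * f.coeff j :=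
    hdeg ▸ neg_one_pow_mul_coeff_nonneg hmonic has1
  have hnext : f.coeff (n - 1) < 0 := by
    have := nextCoeff_neg_of_roots_re_nonneg hmonic has1 has2
    rwa [nextCoeff_of_natDegree_pos (by omega), hdeg] at this
  have hq_pos : ∀ y, 0 < y → 0 < oddSplit f n y := fun y hy =>
    oddSplit_pos f n hn hsign hnext hy
  have hf_pos : ∀ y, x₀ ≤ y → 0 < f.eval y := fun y =>
    pos_of_continuousOn_Ici f.continuous.continuousOn
      (by rw [eval_eq_evenSplit_sub_oddSplit f n hdeg]; linarith) hnoroot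
  refine strictMono_tendsto_atTop_of_lt_map (T := fun y => y * evenSplit f n y / oddSplit f n y)
    (fun y hy => ?_) (fun y hy => ?_) hx0.ge hxrec
  · exact (continuous_id.mul (continuous_evenSplit f n)).continuousAt.div
      (continuous_oddSplit f n).continuousAt (hq_pos y (hx₀.trans_le hy)).ne'
  · have hy₀ := hx₀.trans_le hy
    have hfy := hf_pos y hy
    rw [eval_eq_evenSplit_sub_oddSplit f n hdeg] at hfy
    rw [lt_div_iff₀ (hq_pos y hy₀)]
    exact mul_lt_mul_of_pos_left (by linarith) hy₀
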